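/- In a permutation avoiding a nonconsecutive 132 pattern, any two distinct occurrences of the (consecutive) pattern 132 are disjoint; in fact the middle positions of any two distinct occurrences differ by at least 3. -/
import Mathlib


/-- A permutation avoids a nonconsecutive 132 pattern if every occurrence of 132
(indices `i < j < k` with `π i < π k < π j`) occupies three consecutive positions. -/
def AvoidsNonconsec132 {n : ℕ} (π : Equiv.Perm (Fin n)) : Prop :=
  ∀ i j k : Fin n, i < j → j < k → π i < π k → π k < π j →
    (j : ℕ) = (i : ℕ) + 1 ∧ (k : ℕ) = (i : ℕ) + 2

/-- A (consecutive) occurrence of 132 starting at 0-indexed position `p`. -/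
def Occ132At {n : ℕ} (π : Equiv.Perm (Fin n)) (p : ℕ) : Prop :=
  ∃ h : p + 2 < n,
    π ⟨p, by omega⟩ < π ⟨p + 2, h⟩ ∧ π ⟨p + 2, h⟩ < π ⟨p + 1, by omega⟩

lemma occ132_key (n : ℕ) (π : Equiv.Perm (Fin n)) (hav : AvoidsNonconsec132 π)
    (p q : ℕ) (hp : Occ132At π p) (hq : Occ132At π q) (hlt : p < q) : p + 3 ≤ q := by
  by_contra h
  push_neg at h
  obtain ⟨hpn, hp1, hp2⟩ := hp
  obtain ⟨hqn, hq1, hq2⟩ := hq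
  have hcase : q = p + 1 ∨ q = p + 2 := by omega
  rcases hcase with rfl | rfl
  · exact absurd (hp2.trans (hq1.trans hq2)) (lt_irrefl _)
  · have h45 : p + 4 < n := hqn
    obtain ⟨h1, -⟩ := hav ⟨p, by omega⟩ ⟨p + 3, by omega⟩ ⟨p + 4, by omega⟩
      (by simp [Fin.mk_lt_mk]) (by simp [Fin.mk_lt_mk])
      (hp1.trans hq1) hq2
    simp only [Fin.val_mk] at h1
    omega

/-- In a permutation avoiding a nonconsecutive 132 pattern, the middle positions of two
distinct (consecutive) occurrences of 132 differ by at least 3; in particular the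
occurrences are disjoint. -/
theorem occ132_middle_positions_far_apart (n : ℕ) (π : Equiv.Perm (Fin n))
    (hav : AvoidsNonconsec132 π) (p q : ℕ)
    (hp : Occ132At π p) (hq : Occ132At π q) (hpq : p ≠ q) :
    3 ≤ max (p + 1) (q + 1) - min (p + 1) (q + 1) := by
  rcases lt_trichotomy p q with h | h | h
  · have := occ132_key n π hav p q hp hq h; omega
  · exact absurd h hpq
  · have := occ132_key n π hav q p hq hp h; omega
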